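/- Let M~ ⊆ F~ be the homogenization of a graded submodule M ⊆ F with respect to a weight (ω,ε). Then the quotient F~/M~ is free as a K[t]-module; moreover evaluating t at 1 recovers M and evaluating t at 0 yields the initial module in_{(ω,ε)}(M). -/

import Mathlib

/-!  Basic setup: the polynomial ring `A = K[X_1,…,X_n]`, a graded free module
`F = ⊕_{j} A(-d_j)` realized as `Fin k → A`, weight orders `(ω, ε)`, initial
modules, Hilbert functions, graded free resolutions, Betti numbers,
regularity and componentwise notions, following Caviglia–Varbaro,
"Componentwise regularity (I)". -/

namespace CregPaper

abbrev A (K : Type*) [Field K] (n : ℕ) := MvPolynomial (Fin n) K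

variable {K : Type*} [Field K] {n k : ℕ}

/-- `(ω)`-weight of an exponent vector `u`. -/
def wdeg (ω : Fin n → ℕ) (u : Fin n →₀ ℕ) : ℕ := u.sum fun i e => ω i * e

/-- total (standard) degree of an exponent vector `u`. -/
def tdeg (u : Fin n →₀ ℕ) : ℕ := u.sum fun _ e => e

/-- largest `(ω,ε)`-weight of a monomial in the support of `f ∈ F`. -/
noncomputable def maxWt (ω : Fin n → ℕ) (ε : Fin k → ℕ) (f : Fin k → A K n) : ℕ :=
  Finset.univ.sup fun j => (f j).support.sup fun u => wdeg ω u + ε j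

/-- the initial part `in_{(ω,ε)}(f)`: the sum of the terms of `f` of largest weight. -/
noncomputable def inForm (ω : Fin n → ℕ) (ε : Fin k → ℕ) (f : Fin k → A K n) :
    Fin k → A K n :=
  fun j => ∑ u ∈ (f j).support.filter fun u => wdeg ω u + ε j = maxWt ω ε f,
    MvPolynomial.monomial u ((f j).coeff u)

/-- the initial module `in_{(ω,ε)}(M)`. -/
noncomputable def inMod (ω : Fin n → ℕ) (ε : Fin k → ℕ)
    (M : Submodule (A K n) (Fin k → A K n)) : Submodule (A K n) (Fin k → A K n) :=
  Submodule.span (A K n) {g | ∃ f ∈ M, f ≠ 0 ∧ g = inForm ω ε f}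

/-- `f ∈ F = ⊕_j A(-d_j)` is homogeneous of (standard) degree `a`. -/
def IsHomog (d : Fin k → ℕ) (a : ℕ) (f : Fin k → A K n) : Prop :=
  ∀ j, ∀ u ∈ (f j).support, tdeg u + d j = a

/-- the `K`-subspace of `F` of homogeneous elements of degree `a`. -/
noncomputable def homogSub (d : Fin k → ℕ) (a : ℕ) : Submodule K (Fin k → A K n) where
  carrier := {f | IsHomog d a f}
  add_mem' := by
    intro f g hf hg j u hu
    rcases Finset.mem_union.mp (MvPolynomial.support_add hu) with h | h
    · exact hf j u h
    · exact hg j u h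
  zero_mem' := by intro j u hu; simp at hu
  smul_mem' := by
    intro c f hf j u hu
    exact hf j u (MvPolynomial.support_smul hu)

/-- the degree-`a` homogeneous component of `f ∈ F`. -/
noncomputable def homogComp (d : Fin k → ℕ) (f : Fin k → A K n) (a : ℕ) : Fin k → A K n :=
  fun j => ∑ u ∈ (f j).support.filter fun u => tdeg u + d j = a,
    MvPolynomial.monomial u ((f j).coeff u)

/-- `M ⊆ F` is a graded submodule. -/
def IsGradedSub (d : Fin k → ℕ) (M : Submodule (A K n) (Fin k → A K n)) : Prop :=
  ∀ f ∈ M, ∀ a, homogComp d f a ∈ M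

/-- Hilbert function of `M ⊆ F` in degree `a`. -/
noncomputable def hilb (d : Fin k → ℕ) (M : Submodule (A K n) (Fin k → A K n)) (a : ℕ) : ℕ :=
  Module.finrank K ↥(Submodule.restrictScalars K M ⊓ homogSub d a)

/-- the homogeneous maximal ideal `m = (X_1,…,X_n)` of `A`. -/
noncomputable def mIdeal (K : Type*) [Field K] (n : ℕ) : Ideal (A K n) :=
  RingHom.ker (MvPolynomial.constantCoeff : A K n →+* K)

/-- graded Betti number `β_{0,a}(M) = dim_K (M/mM)_a`, the number of minimal
generators of the graded module `M` in degree `a`. -/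
noncomputable def beta0 (d : Fin k → ℕ) (M : Submodule (A K n) (Fin k → A K n)) (a : ℕ) : ℕ :=
  hilb d M a - hilb d (mIdeal K n • M) a

/-- A graded free resolution of a graded submodule `M` of `F = ⊕_j A(-d_j)`:
`⋯ → A^{rk 1} → A^{rk 0} → M → 0`, each free module coming with degree shifts
`sh i`, all maps graded of degree `0`. -/
structure GFRes (d : Fin k → ℕ) (M : Submodule (A K n) (Fin k → A K n)) where
  rk : ℕ → ℕ
  sh : (i : ℕ) → Fin (rk i) → ℕ
  aug : (Fin (rk 0) → A K n) →ₗ[A K n] (Fin k → A K n)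
  diff : (i : ℕ) → ((Fin (rk (i+1)) → A K n) →ₗ[A K n] (Fin (rk i) → A K n))
  aug_range : LinearMap.range aug = M
  aug_hom : ∀ l, IsHomog d (sh 0 l) (aug (Pi.single l 1))
  diff_hom : ∀ i l, IsHomog (sh i) (sh (i+1) l) (diff i (Pi.single l 1))
  ex0 : LinearMap.range (diff 0) = LinearMap.ker aug
  exs : ∀ i, LinearMap.range (diff (i+1)) = LinearMap.ker (diff i)

/-- minimality of a graded free resolution: all entries of the differential
matrices lie in the maximal ideal. -/
def GFRes.Minimal {d : Fin k → ℕ} {M : Submodule (A K n) (Fin k → A K n)}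
    (res : GFRes d M) : Prop :=
  ∀ i x l, res.diff i x l ∈ mIdeal K n

/-- the graded Betti number `β_{i,j}(M)` read off from a (minimal) resolution. -/
noncomputable def GFRes.betti {d : Fin k → ℕ} {M : Submodule (A K n) (Fin k → A K n)}
    (res : GFRes d M) (i j : ℕ) : ℕ :=
  (Finset.univ.filter fun l => res.sh i l = j).card

/-- `reg_A(M) ≤ r`: there is a minimal graded free resolution of `M` with
all shifts in homological degree `i` bounded by `i + r`. -/
def RegLE (d : Fin k → ℕ) (M : Submodule (A K n) (Fin k → A K n)) (r : ℕ) : Prop :=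
  ∃ res : GFRes d M, res.Minimal ∧ ∀ i l, res.sh i l ≤ i + r

/-- `M_{⟨a⟩}`: the submodule generated by the homogeneous elements of degree `a` of `M`. -/
noncomputable def compSub (d : Fin k → ℕ) (M : Submodule (A K n) (Fin k → A K n)) (a : ℕ) :
    Submodule (A K n) (Fin k → A K n) :=
  Submodule.span (A K n) {f | f ∈ M ∧ IsHomog d a f}

/-- `M` is `r`-componentwise regular: `reg (M_{⟨a⟩}) ≤ a + r` for all `a`. -/
def CWRegLE (d : Fin k → ℕ) (M : Submodule (A K n) (Fin k → A K n)) (r : ℕ) : Prop :=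
  ∀ a, RegLE d (compSub d M a) (a + r)

/-- `M` is componentwise linear: each `M_{⟨a⟩}` is zero or has regularity `a`. -/
def CompLinear (d : Fin k → ℕ) (M : Submodule (A K n) (Fin k → A K n)) : Prop :=
  ∀ a, compSub d M a = ⊥ ∨ RegLE d (compSub d M a) a

/-- `M` is generated in degrees `≤ a`. -/
def GenInDegLE (d : Fin k → ℕ) (M : Submodule (A K n) (Fin k → A K n)) (a : ℕ) : Prop :=
  M ≤ Submodule.span (A K n) {f | f ∈ M ∧ ∃ b ≤ a, IsHomog d b f}

end CregPaper
/-!  The flat family: `Ã = A[t]` with `deg X_i = (1, w_i)`, `deg t = (0,1)`,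
homogenization of elements and modules with respect to `(ω,ε)`, saturation
with respect to `t`, and specializations `t = α`. -/

namespace CregPaper

variable {K : Type*} [Field K] {n k : ℕ}

abbrev At (K : Type*) [Field K] (n : ℕ) := Polynomial (A K n)

/-- the `(ω,ε)`-homogenization `f̃ ∈ F̃` of `f ∈ F`. -/
noncomputable def homogenize (ω : Fin n → ℕ) (ε : Fin k → ℕ) (f : Fin k → A K n) :
    Fin k → At K n :=
  fun j => ∑ u ∈ (f j).support,
    Polynomial.monomial (maxWt ω ε f - (wdeg ω u + ε j))
      (MvPolynomial.monomial u ((f j).coeff u))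

/-- the homogenization `M̃ ⊆ F̃` of a submodule `M ⊆ F`. -/
noncomputable def Mtilde (ω : Fin n → ℕ) (ε : Fin k → ℕ)
    (M : Submodule (A K n) (Fin k → A K n)) : Submodule (At K n) (Fin k → At K n) :=
  Submodule.span (At K n) {g | ∃ f ∈ M, g = homogenize ω ε f}

/-- saturation `N : t^∞` of a submodule `N ⊆ F̃`. -/
noncomputable def tsat (N : Submodule (At K n) (Fin k → At K n)) :
    Submodule (At K n) (Fin k → At K n) where
  carrier := {x | ∃ e : ℕ, ((Polynomial.X : At K n) ^ e) • x ∈ N}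
  add_mem' := by
    rintro x y ⟨e, he⟩ ⟨e', he'⟩
    refine ⟨e + e', ?_⟩
    rw [smul_add]
    refine Submodule.add_mem _ ?_ ?_
    · rw [pow_add, mul_comm, mul_smul]; exact Submodule.smul_mem _ _ he
    · rw [pow_add, mul_smul]; exact Submodule.smul_mem _ _ he'
  zero_mem' := ⟨0, by simp⟩
  smul_mem' := by
    rintro c x ⟨e, he⟩
    exact ⟨e, by rw [smul_comm]; exact Submodule.smul_mem _ _ he⟩

/-- image in `F` of a submodule `N ⊆ F̃` under the evaluation `t ↦ α`. -/
noncomputable def evalSub (α : K) (N : Submodule (At K n) (Fin k → At K n)) :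
    Submodule (A K n) (Fin k → A K n) :=
  Submodule.span (A K n)
    ((fun g : Fin k → At K n => fun j => Polynomial.eval (algebraMap K (A K n) α) (g j)) '' N)

/-- the linear map `R^r → M` sending the standard basis to `v`. -/
noncomputable def combo {R : Type*} [CommRing R] {M : Type*} [AddCommGroup M] [Module R M]
    {r : ℕ} (v : Fin r → M) : (Fin r → R) →ₗ[R] M where
  toFun x := ∑ i, x i • v i
  map_add' x y := by simp [add_smul, Finset.sum_add_distrib]
  map_smul' c x := by simp [mul_smul, Finset.smul_sum]

end CregPaper

namespace CregPaper

variable {K : Type*} [Field K] {n k : ℕ}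

/-! ### Coefficient-level infrastructure -/

lemma wdeg_add (ω : Fin n → ℕ) (u v : Fin n →₀ ℕ) : wdeg ω (u + v) = wdeg ω u + wdeg ω v := by
  classical
  exact Finsupp.sum_add_index' (by simp) (by intro i e1 e2; ring)

lemma tdeg_add (u v : Fin n →₀ ℕ) : tdeg (u + v) = tdeg u + tdeg v := by
  classical
  exact Finsupp.sum_add_index' (by simp) (by intro i e1 e2; rfl)

lemma wdeg_zero (ω : Fin n → ℕ) : wdeg ω 0 = 0 := by simp [wdeg]
lemma tdeg_zero : tdeg (0 : Fin n →₀ ℕ) = 0 := by simp [tdeg]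

/-- the bigraded coefficient extractor -/
noncomputable def pc (x : Fin k → At K n) (j : Fin k) (i : ℕ) (u : Fin n →₀ ℕ) : K :=
  MvPolynomial.coeff u ((x j).coeff i)

lemma ext_pc {x y : Fin k → At K n} (h : ∀ j i u, pc x j i u = pc y j i u) : x = y := by
  funext j; exact Polynomial.ext fun i => MvPolynomial.ext _ _ fun u => h j i u

lemma pc_add (x y : Fin k → At K n) (j i u) : pc (x + y) j i u = pc x j i u + pc y j i u := by
  simp [pc, MvPolynomial.coeff_add]

lemma pc_zero (j : Fin k) (i u) : pc (0 : Fin k → At K n) j i u = 0 := by simp [pc]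

lemma pc_sum {α : Type*} (s : Finset α) (f : α → (Fin k → At K n)) (j i u) :
    pc (∑ a ∈ s, f a) j i u = ∑ a ∈ s, pc (f a) j i u := by
  classical
  induction s using Finset.induction with
  | empty => simp [pc_zero]
  | insert _ _ h ih => simp [Finset.sum_insert h, pc_add, ih]

lemma poly_coeff_monomial_mul (m : ℕ) (P : A K n) (q : At K n) (i : ℕ) :
    (Polynomial.monomial m P * q).coeff i = if m ≤ i then P * q.coeff (i - m) else 0 := by
  have : Polynomial.monomial m P * q = q * Polynomial.C P * Polynomial.X ^ m := by
    rw [← Polynomial.C_mul_X_pow_eq_monomial]; ring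
  rw [this, Polynomial.coeff_mul_X_pow', Polynomial.coeff_mul_C]
  split <;> ring

lemma pc_monomial_smul (m : ℕ) (v : Fin n →₀ ℕ) (c : K) (x : Fin k → At K n) (j i u) :
    pc ((Polynomial.monomial m (MvPolynomial.monomial v c) : At K n) • x) j i u
      = if m ≤ i ∧ v ≤ u then c * pc x j (i - m) (u - v) else 0 := by
  have hsmul : ((Polynomial.monomial m (MvPolynomial.monomial v c) : At K n) • x) j
      = Polynomial.monomial m (MvPolynomial.monomial v c) * x j := rfl
  rw [pc, hsmul, poly_coeff_monomial_mul]
  by_cases h : m ≤ i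
  · simp only [if_pos h]
    rw [mul_comm ((MvPolynomial.monomial v) c), MvPolynomial.coeff_mul_monomial']
    by_cases h2 : v ≤ u
    · simp [h, h2, pc, mul_comm]
    · simp [h, h2]
  · simp [h]

lemma wt_le_maxWt (ω : Fin n → ℕ) (ε : Fin k → ℕ) (f : Fin k → A K n) (j : Fin k)
    {u : Fin n →₀ ℕ} (hu : u ∈ (f j).support) : wdeg ω u + ε j ≤ maxWt ω ε f := by
  refine le_trans (Finset.le_sup (f := fun u => wdeg ω u + ε j) hu) ?_
  exact Finset.le_sup (f := fun j => (f j).support.sup fun u => wdeg ω u + ε j)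
    (Finset.mem_univ j)

lemma pc_homogenize (ω : Fin n → ℕ) (ε : Fin k → ℕ) (f : Fin k → A K n) (j i u) :
    pc (homogenize ω ε f) j i u
      = if maxWt ω ε f = wdeg ω u + ε j + i then (f j).coeff u else 0 := by
  classical
  rw [pc, homogenize]
  rw [Polynomial.finset_sum_coeff, MvPolynomial.coeff_sum]
  have hterm : ∀ u' ∈ (f j).support,
      MvPolynomial.coeff u ((Polynomial.monomial (maxWt ω ε f - (wdeg ω u' + ε j))
          ((MvPolynomial.monomial u') ((f j).coeff u'))).coeff i)
        = if u' = u ∧ i = maxWt ω ε f - (wdeg ω u' + ε j) then (f j).coeff u else 0 := by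
    intro u' hu'
    rw [Polynomial.coeff_monomial]
    by_cases h : maxWt ω ε f - (wdeg ω u' + ε j) = i
    · rw [if_pos h, MvPolynomial.coeff_monomial]
      by_cases h2 : u' = u
      · subst h2; simp [h.symm]
      · simp [h2, h.symm]
    · rw [if_neg h]
      simp only [MvPolynomial.coeff_zero]
      have : ¬ (u' = u ∧ i = maxWt ω ε f - (wdeg ω u' + ε j)) := by
        rintro ⟨rfl, rfl⟩; exact h rfl
      simp [this]
  rw [Finset.sum_congr rfl hterm]
  by_cases hu : u ∈ (f j).support
  · have hwt := wt_le_maxWt ω ε f j hu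
    rw [Finset.sum_eq_single u]
    · by_cases h : i = maxWt ω ε f - (wdeg ω u + ε j)
      · rw [if_pos ⟨rfl, h⟩, if_pos (by omega)]
      · rw [if_neg (by tauto), if_neg (by omega)]
    · intro u' _ hne
      exact if_neg (by rintro ⟨rfl, -⟩; exact hne rfl)
    · intro h; exact absurd hu h
  · have hc : (f j).coeff u = 0 := by
      simpa using MvPolynomial.notMem_support_iff.mp hu
    rw [hc]
    simp only [ite_self]
    simp [Finset.sum_const_zero]

/-! ### Bihomogeneous components -/

noncomputable def bicomp (d : Fin k → ℕ) (ω : Fin n → ℕ) (ε : Fin k → ℕ) (a b : ℕ)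
    (x : Fin k → At K n) : Fin k → At K n :=
  fun j => ∑ i ∈ (x j).support, Polynomial.monomial i
    (∑ u ∈ ((x j).coeff i).support.filter
        (fun u => (a, b) = (tdeg u + d j, wdeg ω u + ε j + i)),
      MvPolynomial.monomial u (MvPolynomial.coeff u ((x j).coeff i)))

lemma bicomp_pc (d : Fin k → ℕ) (ω : Fin n → ℕ) (ε : Fin k → ℕ) (a b : ℕ)
    (x : Fin k → At K n) (j i u) :
    pc (bicomp d ω ε a b x) j i u
      = if (a, b) = (tdeg u + d j, wdeg ω u + ε j + i) then pc x j i u else 0 := by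
  classical
  have key : ∀ i', MvPolynomial.coeff u
      (∑ u' ∈ ((x j).coeff i').support.filter
          (fun u' => (a, b) = (tdeg u' + d j, wdeg ω u' + ε j + i')),
        MvPolynomial.monomial u' (MvPolynomial.coeff u' ((x j).coeff i')))
      = if (a, b) = (tdeg u + d j, wdeg ω u + ε j + i') then pc x j i' u else 0 := by
    intro i'
    rw [MvPolynomial.coeff_sum]
    rw [Finset.sum_congr rfl fun u' _ => MvPolynomial.coeff_monomial u u' _]
    rw [Finset.sum_ite_eq' _ u]
    simp only [Finset.mem_filter]
    by_cases hc : (a, b) = (tdeg u + d j, wdeg ω u + ε j + i')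
    · rw [if_pos hc]
      by_cases hu : u ∈ ((x j).coeff i').support
      · rw [if_pos ⟨hu, hc⟩]; rfl
      · rw [if_neg (by tauto)]
        rw [pc, MvPolynomial.notMem_support_iff.mp hu]
    · rw [if_neg hc, if_neg (by tauto)]
  rw [pc, bicomp, Polynomial.finset_sum_coeff]
  have step : ∀ i' ∈ (x j).support, MvPolynomial.coeff u
      ((Polynomial.monomial i'
        (∑ u' ∈ ((x j).coeff i').support.filter
            (fun u' => (a, b) = (tdeg u' + d j, wdeg ω u' + ε j + i')),
          MvPolynomial.monomial u' (MvPolynomial.coeff u' ((x j).coeff i')))).coeff i)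
      = if i' = i then (if (a, b) = (tdeg u + d j, wdeg ω u + ε j + i') then pc x j i' u else 0)
        else 0 := by
    intro i' _
    rw [Polynomial.coeff_monomial]
    by_cases h : i' = i
    · rw [if_pos h, if_pos h, key]
    · rw [if_neg h, if_neg h, MvPolynomial.coeff_zero]
  rw [MvPolynomial.coeff_sum, Finset.sum_congr rfl step, Finset.sum_ite_eq' _ i]
  by_cases hi : i ∈ (x j).support
  · rw [if_pos hi]
  · rw [if_neg hi]
    have : pc x j i u = 0 := by
      rw [pc, Polynomial.notMem_support_iff.mp hi, MvPolynomial.coeff_zero]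
    rw [this, ite_self]

lemma bicomp_add (d : Fin k → ℕ) (ω : Fin n → ℕ) (ε : Fin k → ℕ) (a b : ℕ)
    (x y : Fin k → At K n) :
    bicomp d ω ε a b (x + y) = bicomp d ω ε a b x + bicomp d ω ε a b y := by
  apply ext_pc; intro j i u
  rw [pc_add, bicomp_pc, bicomp_pc, bicomp_pc, pc_add]
  split <;> simp

lemma bicomp_zero (d : Fin k → ℕ) (ω : Fin n → ℕ) (ε : Fin k → ℕ) (a b : ℕ) :
    bicomp d ω ε a b (0 : Fin k → At K n) = 0 := by
  apply ext_pc; intro j i u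
  rw [bicomp_pc, pc_zero, ite_self]

lemma bicomp_monomial_smul (d : Fin k → ℕ) (ω : Fin n → ℕ) (ε : Fin k → ℕ) (a b m : ℕ)
    (v : Fin n →₀ ℕ) (c : K) (x : Fin k → At K n) :
    bicomp d ω ε a b ((Polynomial.monomial m (MvPolynomial.monomial v c) : At K n) • x)
      = if tdeg v ≤ a ∧ m + wdeg ω v ≤ b
        then (Polynomial.monomial m (MvPolynomial.monomial v c) : At K n) •
          bicomp d ω ε (a - tdeg v) (b - (m + wdeg ω v)) x
        else 0 := by
  apply ext_pc; intro j i u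
  rw [bicomp_pc, pc_monomial_smul]
  by_cases hguard : tdeg v ≤ a ∧ m + wdeg ω v ≤ b
  · rw [if_pos hguard, pc_monomial_smul]
    by_cases hm : m ≤ i ∧ v ≤ u
    · rw [bicomp_pc]
      have huv : u - v + v = u := tsub_add_cancel_of_le hm.2
      have h1 : tdeg (u - v) + tdeg v = tdeg u := by rw [← tdeg_add, huv]
      have h2 : wdeg ω (u - v) + wdeg ω v = wdeg ω u := by rw [← wdeg_add, huv]
      simp only [Prod.mk.injEq]
      by_cases hc : a = tdeg u + d j ∧ b = wdeg ω u + ε j + i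
      · obtain ⟨hc1, hc2⟩ := hc
        have hgoal : a - tdeg v = tdeg (u - v) + d j
            ∧ b - (m + wdeg ω v) = wdeg ω (u - v) + ε j + (i - m) := by
          constructor <;> omega
        rw [if_pos ⟨hc1, hc2⟩, if_pos hm, if_pos hm, if_pos hgoal]
      · have hgoal : ¬ (a - tdeg v = tdeg (u - v) + d j
            ∧ b - (m + wdeg ω v) = wdeg ω (u - v) + ε j + (i - m)) := by
          rintro ⟨hg1, hg2⟩
          exact hc ⟨by omega, by omega⟩
        rw [if_neg hc, if_pos hm, if_neg hgoal, mul_zero]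
    · rw [if_neg hm, if_neg hm, ite_self]
  · rw [if_neg hguard, pc_zero]
    by_cases hc : (a, b) = (tdeg u + d j, wdeg ω u + ε j + i)
    · rw [if_pos hc]
      by_cases hm : m ≤ i ∧ v ≤ u
      · exfalso
        have huv : u - v + v = u := tsub_add_cancel_of_le hm.2
        have h1 : tdeg (u - v) + tdeg v = tdeg u := by rw [← tdeg_add, huv]
        have h2 : wdeg ω (u - v) + wdeg ω v = wdeg ω u := by rw [← wdeg_add, huv]
        simp only [Prod.mk.injEq] at hc
        obtain ⟨hc1, hc2⟩ := hc
        omega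
      · rw [if_neg hm]
    · rw [if_neg hc]

noncomputable def bidegs (d : Fin k → ℕ) (ω : Fin n → ℕ) (ε : Fin k → ℕ)
    (x : Fin k → At K n) : Finset (ℕ × ℕ) :=
  Finset.univ.biUnion fun j => (x j).support.biUnion fun i =>
    ((x j).coeff i).support.image fun u => (tdeg u + d j, wdeg ω u + ε j + i)

lemma sum_bicomp (d : Fin k → ℕ) (ω : Fin n → ℕ) (ε : Fin k → ℕ) (x : Fin k → At K n) :
    ∑ p ∈ bidegs d ω ε x, bicomp d ω ε p.1 p.2 x = x := by
  classical
  apply ext_pc; intro j i u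
  rw [pc_sum, Finset.sum_congr rfl fun p _ => bicomp_pc d ω ε p.1 p.2 x j i u]
  simp only [Prod.mk.eta]
  rw [Finset.sum_ite_eq' _ (tdeg u + d j, wdeg ω u + ε j + i)]
  by_cases h : pc x j i u = 0
  · rw [h, ite_self]
  · rw [if_pos]
    rw [bidegs]
    refine Finset.mem_biUnion.mpr ⟨j, Finset.mem_univ j, ?_⟩
    refine Finset.mem_biUnion.mpr ⟨i, ?_, ?_⟩
    · rw [Polynomial.mem_support_iff]
      intro h0
      exact h (by rw [pc, h0, MvPolynomial.coeff_zero])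
    · exact Finset.mem_image.mpr ⟨u, MvPolynomial.mem_support_iff.mpr h, rfl⟩

/-! ### Evaluation at `t = 1` -/

noncomputable def E1 (x : Fin k → At K n) : Fin k → A K n := fun j => (x j).eval 1

lemma E1_add (x y : Fin k → At K n) : E1 (x + y) = E1 x + E1 y := by
  funext j; exact Polynomial.eval_add

lemma E1_zero : E1 (0 : Fin k → At K n) = 0 := by
  funext j; simp [E1]

lemma E1_sum {α : Type*} (s : Finset α) (f : α → (Fin k → At K n)) :
    E1 (∑ a ∈ s, f a) = ∑ a ∈ s, E1 (f a) := by
  classical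
  induction s using Finset.induction with
  | empty => simp [E1_zero]
  | insert _ _ h ih => rw [Finset.sum_insert h, Finset.sum_insert h, E1_add, ih]

lemma E1_monomial_smul (m : ℕ) (P : A K n) (x : Fin k → At K n) :
    E1 ((Polynomial.monomial m P : At K n) • x) = P • E1 x := by
  funext j
  show ((Polynomial.monomial m P : At K n) * x j).eval 1 = P * (x j).eval 1
  rw [Polynomial.eval_mul, Polynomial.eval_monomial, one_pow, mul_one]

lemma E1_smul (g : At K n) (x : Fin k → At K n) :
    E1 (g • x) = Polynomial.eval 1 g • E1 x := by
  funext j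
  show (g * x j).eval 1 = g.eval 1 * (x j).eval 1
  rw [Polynomial.eval_mul]

lemma E1_homogenize (ω : Fin n → ℕ) (ε : Fin k → ℕ) (f : Fin k → A K n) :
    E1 (homogenize ω ε f) = f := by
  funext j
  show (∑ u ∈ (f j).support, Polynomial.monomial (maxWt ω ε f - (wdeg ω u + ε j))
      (MvPolynomial.monomial u ((f j).coeff u))).eval 1 = f j
  rw [Polynomial.eval_finset_sum]
  simp only [Polynomial.eval_monomial, one_pow, mul_one]
  exact MvPolynomial.support_sum_monomial_coeff (f j)

lemma coeff_E1 (y : Fin k → At K n) (j u) :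
    MvPolynomial.coeff u (E1 y j) = ∑ i ∈ (y j).support, pc y j i u := by
  show MvPolynomial.coeff u ((y j).eval 1) = _
  rw [Polynomial.eval_eq_sum, Polynomial.sum_def]
  simp only [one_pow, mul_one]
  rw [MvPolynomial.coeff_sum]
  rfl

lemma coeff_E1_bicomp (d : Fin k → ℕ) (ω : Fin n → ℕ) (ε : Fin k → ℕ) (a b : ℕ)
    (x : Fin k → At K n) (j u) :
    MvPolynomial.coeff u (E1 (bicomp d ω ε a b x) j)
      = if wdeg ω u + ε j ≤ b ∧ a = tdeg u + d j
        then pc x j (b - (wdeg ω u + ε j)) u else 0 := by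
  rw [coeff_E1]
  by_cases hcond : wdeg ω u + ε j ≤ b ∧ a = tdeg u + d j
  · obtain ⟨h1, h2⟩ := hcond
    rw [if_pos ⟨h1, h2⟩]
    rw [Finset.sum_eq_single (b - (wdeg ω u + ε j))]
    · rw [bicomp_pc, if_pos (by rw [Prod.mk.injEq]; exact ⟨h2, by omega⟩)]
    · intro i' _ hne
      rw [bicomp_pc, if_neg]
      rw [Prod.mk.injEq]
      rintro ⟨-, hb⟩
      exact hne (by omega)
    · intro h0
      rw [pc, Polynomial.notMem_support_iff.mp h0, MvPolynomial.coeff_zero]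
  · rw [if_neg hcond]
    apply Finset.sum_eq_zero
    intro i' _
    rw [bicomp_pc, if_neg]
    rw [Prod.mk.injEq]
    rintro ⟨ha, hb⟩
    exact hcond ⟨by omega, ha⟩

lemma maxWt_E1_bicomp_le (d : Fin k → ℕ) (ω : Fin n → ℕ) (ε : Fin k → ℕ) (a b : ℕ)
    (x : Fin k → At K n) : maxWt ω ε (E1 (bicomp d ω ε a b x)) ≤ b := by
  rw [maxWt]
  apply Finset.sup_le
  intro j _
  apply Finset.sup_le
  intro u hu
  rw [MvPolynomial.mem_support_iff, coeff_E1_bicomp] at hu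
  by_cases h : wdeg ω u + ε j ≤ b ∧ a = tdeg u + d j
  · exact h.1
  · rw [if_neg h] at hu; exact absurd rfl hu

lemma bicomp_eq_smul_homogenize (d : Fin k → ℕ) (ω : Fin n → ℕ) (ε : Fin k → ℕ) (a b : ℕ)
    (x : Fin k → At K n) :
    bicomp d ω ε a b x
      = (Polynomial.monomial (b - maxWt ω ε (E1 (bicomp d ω ε a b x)))
          (MvPolynomial.monomial 0 (1:K)) : At K n) •
        homogenize ω ε (E1 (bicomp d ω ε a b x)) := by
  set g := E1 (bicomp d ω ε a b x) with hgdef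
  have hb : maxWt ω ε g ≤ b := maxWt_E1_bicomp_le d ω ε a b x
  apply ext_pc; intro j i u
  have hgam : pc (bicomp d ω ε a b x) j i u
      = if b = wdeg ω u + ε j + i then MvPolynomial.coeff u (g j) else 0 := by
    rw [hgdef, coeff_E1_bicomp]
    by_cases h1 : b = wdeg ω u + ε j + i
    · rw [if_pos h1, bicomp_pc]
      by_cases h2 : a = tdeg u + d j
      · rw [if_pos (by rw [Prod.mk.injEq]; exact ⟨h2, h1⟩), if_pos ⟨by omega, h2⟩]
        congr 1
        omega
      · rw [if_neg (by rw [Prod.mk.injEq]; tauto), if_neg (by tauto)]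
    · rw [if_neg h1, bicomp_pc, if_neg (by rw [Prod.mk.injEq]; tauto)]
  rw [hgam, pc_monomial_smul]
  by_cases h0 : MvPolynomial.coeff u (g j) = 0
  · rw [pc_homogenize, tsub_zero]
    have hc : (g j).coeff u = 0 := h0
    rw [hc]
    split_ifs <;> simp
  · have hsupp : u ∈ (g j).support := MvPolynomial.mem_support_iff.mpr h0
    have hw : wdeg ω u + ε j ≤ maxWt ω ε g := wt_le_maxWt ω ε g j hsupp
    rw [pc_homogenize, tsub_zero]
    by_cases hL : b = wdeg ω u + ε j + i
    · rw [if_pos hL, if_pos ⟨by omega, (zero_le : (0 : Fin n →₀ ℕ) ≤ u)⟩, if_pos (by omega), one_mul]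
    · rw [if_neg hL]
      by_cases hOut : b - maxWt ω ε g ≤ i ∧ (0 : Fin n →₀ ℕ) ≤ u
      · rw [if_pos hOut, if_neg (by obtain ⟨ho, -⟩ := hOut; omega), mul_zero]
      · rw [if_neg hOut]

lemma coeff_homogComp (d : Fin k → ℕ) (f : Fin k → A K n) (a : ℕ) (j u) :
    MvPolynomial.coeff u (homogComp d f a j)
      = if tdeg u + d j = a then MvPolynomial.coeff u (f j) else 0 := by
  classical
  show MvPolynomial.coeff u (∑ u' ∈ (f j).support.filter (fun u' => tdeg u' + d j = a),
      MvPolynomial.monomial u' ((f j).coeff u')) = _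
  rw [MvPolynomial.coeff_sum]
  rw [Finset.sum_congr rfl fun u' _ => MvPolynomial.coeff_monomial u u' _]
  rw [Finset.sum_ite_eq' _ u]
  simp only [Finset.mem_filter]
  by_cases hc : tdeg u + d j = a
  · rw [if_pos hc]
    by_cases hu : u ∈ (f j).support
    · rw [if_pos ⟨hu, hc⟩]
    · rw [if_neg (by tauto), MvPolynomial.notMem_support_iff.mp hu]
  · rw [if_neg hc, if_neg (by tauto)]

lemma E1_bicomp_homogenize (d : Fin k → ℕ) (ω : Fin n → ℕ) (ε : Fin k → ℕ) (a b : ℕ)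
    (f : Fin k → A K n) :
    E1 (bicomp d ω ε a b (homogenize ω ε f))
      = if b = maxWt ω ε f then homogComp d f a else 0 := by
  funext j
  apply MvPolynomial.ext
  intro u
  rw [coeff_E1_bicomp]
  by_cases hb : b = maxWt ω ε f
  · rw [if_pos hb]
    show _ = MvPolynomial.coeff u (homogComp d f a j)
    rw [coeff_homogComp]
    by_cases hcond : wdeg ω u + ε j ≤ b ∧ a = tdeg u + d j
    · rw [if_pos hcond, pc_homogenize, if_pos (by omega), if_pos hcond.2.symm]
    · rw [if_neg hcond]
      by_cases h2 : tdeg u + d j = a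
      · rw [if_pos h2]
        by_cases hu : u ∈ (f j).support
        · exact absurd ⟨by have := wt_le_maxWt ω ε f j hu; omega, h2.symm⟩ hcond
        · exact (MvPolynomial.notMem_support_iff.mp hu).symm
      · rw [if_neg h2]
  · rw [if_neg hb]
    show _ = MvPolynomial.coeff u ((0 : Fin k → A K n) j)
    by_cases hcond : wdeg ω u + ε j ≤ b ∧ a = tdeg u + d j
    · rw [if_pos hcond, pc_homogenize, if_neg (by omega)]
      simp
    · rw [if_neg hcond]
      simp

/-! ### The membership criterion for `Mtilde` -/

lemma bicomp_sum (d : Fin k → ℕ) (ω : Fin n → ℕ) (ε : Fin k → ℕ) (a b : ℕ)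
    {α : Type*} (s : Finset α) (f : α → (Fin k → At K n)) :
    bicomp d ω ε a b (∑ c ∈ s, f c) = ∑ c ∈ s, bicomp d ω ε a b (f c) := by
  classical
  induction s using Finset.induction with
  | empty => simp [bicomp_zero]
  | insert _ _ h ih => rw [Finset.sum_insert h, Finset.sum_insert h, bicomp_add, ih]

lemma smul_eq_sum_monomial_smul (g : At K n) (x : Fin k → At K n) :
    g • x = ∑ m ∈ g.support, ∑ v ∈ (g.coeff m).support,
      (Polynomial.monomial m
        (MvPolynomial.monomial v (MvPolynomial.coeff v (g.coeff m))) : At K n) • x := by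
  have hg : g = ∑ m ∈ g.support, ∑ v ∈ (g.coeff m).support,
      Polynomial.monomial m (MvPolynomial.monomial v (MvPolynomial.coeff v (g.coeff m))) := by
    conv_lhs => rw [Polynomial.as_sum_support g]
    refine Finset.sum_congr rfl fun m _ => ?_
    conv_lhs => rw [← MvPolynomial.support_sum_monomial_coeff (g.coeff m)]
    rw [map_sum]
  conv_lhs => rw [hg]
  rw [Finset.sum_smul]
  exact Finset.sum_congr rfl fun m _ => Finset.sum_smul

theorem mem_Mtilde_iff (ω : Fin n → ℕ) (d ε : Fin k → ℕ)
    (M : Submodule (A K n) (Fin k → A K n)) (hM : IsGradedSub d M) (x : Fin k → At K n) :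
    x ∈ Mtilde ω ε M ↔ ∀ a b, E1 (bicomp d ω ε a b x) ∈ M := by
  constructor
  · intro hx
    rw [Mtilde] at hx
    induction hx using Submodule.span_induction with
    | mem y hy =>
      obtain ⟨f, hf, rfl⟩ := hy
      intro a b
      rw [E1_bicomp_homogenize]
      split
      · exact hM f hf a
      · exact M.zero_mem
    | zero =>
      intro a b
      rw [bicomp_zero, E1_zero]
      exact M.zero_mem
    | add y z _ _ ihy ihz =>
      intro a b
      rw [bicomp_add, E1_add]
      exact M.add_mem (ihy a b) (ihz a b)
    | smul g y _ ih =>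
      intro a b
      rw [smul_eq_sum_monomial_smul g y, bicomp_sum, E1_sum]
      apply Submodule.sum_mem
      intro m _
      rw [bicomp_sum, E1_sum]
      apply Submodule.sum_mem
      intro v _
      rw [bicomp_monomial_smul]
      split
      · rw [E1_monomial_smul]
        exact M.smul_mem _ (ih _ _)
      · rw [E1_zero]
        exact M.zero_mem
  · intro h
    have hx : x = ∑ p ∈ bidegs d ω ε x, bicomp d ω ε p.1 p.2 x := (sum_bicomp d ω ε x).symm
    rw [hx]
    apply Submodule.sum_mem
    intro p _
    rw [bicomp_eq_smul_homogenize d ω ε p.1 p.2 x]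
    exact Submodule.smul_mem _ _
      (Submodule.subset_span ⟨E1 (bicomp d ω ε p.1 p.2 x), h p.1 p.2, rfl⟩)

/-! ### Specializations `t = 1` and `t = 0` -/

lemma E1_mem_of_mem_Mtilde (ω : Fin n → ℕ) (ε : Fin k → ℕ)
    (M : Submodule (A K n) (Fin k → A K n)) {x : Fin k → At K n}
    (hx : x ∈ Mtilde ω ε M) : E1 x ∈ M := by
  rw [Mtilde] at hx
  induction hx using Submodule.span_induction with
  | mem y hy =>
    obtain ⟨f, hf, rfl⟩ := hy
    rw [E1_homogenize]
    exact hf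
  | zero => rw [E1_zero]; exact M.zero_mem
  | add y z _ _ ihy ihz => rw [E1_add]; exact M.add_mem ihy ihz
  | smul g y _ ih => rw [E1_smul]; exact M.smul_mem _ ih

lemma evalSub_one_Mtilde (ω : Fin n → ℕ) (ε : Fin k → ℕ)
    (M : Submodule (A K n) (Fin k → A K n)) : evalSub 1 (Mtilde ω ε M) = M := by
  have hfun : (fun g : Fin k → At K n => fun j =>
      Polynomial.eval (algebraMap K (A K n) 1) (g j)) = E1 := by
    funext x j
    rw [map_one]
    rfl
  apply le_antisymm
  · rw [evalSub, hfun]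
    apply Submodule.span_le.mpr
    rintro _ ⟨x, hx, rfl⟩
    exact E1_mem_of_mem_Mtilde ω ε M hx
  · intro f hf
    rw [evalSub, hfun]
    apply Submodule.subset_span
    exact ⟨homogenize ω ε f, Submodule.subset_span ⟨f, hf, rfl⟩, E1_homogenize ω ε f⟩

noncomputable def E0 (x : Fin k → At K n) : Fin k → A K n := fun j => (x j).eval 0

lemma E0_zero : E0 (0 : Fin k → At K n) = 0 := by funext j; simp [E0]

lemma E0_add (x y : Fin k → At K n) : E0 (x + y) = E0 x + E0 y := by
  funext j; exact Polynomial.eval_add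

lemma E0_smul (g : At K n) (x : Fin k → At K n) :
    E0 (g • x) = Polynomial.eval 0 g • E0 x := by
  funext j
  show (g * x j).eval 0 = g.eval 0 * (x j).eval 0
  rw [Polynomial.eval_mul]

lemma E0_homogenize (ω : Fin n → ℕ) (ε : Fin k → ℕ) (f : Fin k → A K n) :
    E0 (homogenize ω ε f) = inForm ω ε f := by
  funext j
  show (∑ u ∈ (f j).support, Polynomial.monomial (maxWt ω ε f - (wdeg ω u + ε j))
      (MvPolynomial.monomial u ((f j).coeff u))).eval 0 = inForm ω ε f j
  rw [Polynomial.eval_finset_sum, inForm, Finset.sum_filter]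
  refine Finset.sum_congr rfl fun u hu => ?_
  have hw := wt_le_maxWt ω ε f j hu
  rw [Polynomial.eval_monomial]
  by_cases h : wdeg ω u + ε j = maxWt ω ε f
  · rw [if_pos h, h, Nat.sub_self, pow_zero, mul_one]
  · rw [if_neg h, zero_pow (by omega), mul_zero]

lemma homogenize_zero (ω : Fin n → ℕ) (ε : Fin k → ℕ) :
    homogenize ω ε (0 : Fin k → A K n) = 0 := by
  funext j
  show ∑ u ∈ (MvPolynomial.support (0 : A K n)), _ = (0 : At K n)
  simp

lemma E0_mem_of_mem_Mtilde (ω : Fin n → ℕ) (ε : Fin k → ℕ)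
    (M : Submodule (A K n) (Fin k → A K n)) {x : Fin k → At K n}
    (hx : x ∈ Mtilde ω ε M) : E0 x ∈ inMod ω ε M := by
  rw [Mtilde] at hx
  induction hx using Submodule.span_induction with
  | mem y hy =>
    obtain ⟨f, hf, rfl⟩ := hy
    rw [E0_homogenize]
    by_cases hne : f = 0
    · subst hne
      have : inForm ω ε (0 : Fin k → A K n) = 0 := by
        funext j; simp [inForm]
      rw [this]
      exact Submodule.zero_mem _
    · exact Submodule.subset_span ⟨f, hf, hne, rfl⟩
  | zero => rw [E0_zero]; exact Submodule.zero_mem _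
  | add y z _ _ ihy ihz => rw [E0_add]; exact Submodule.add_mem _ ihy ihz
  | smul g y _ ih => rw [E0_smul]; exact Submodule.smul_mem _ _ ih

lemma evalSub_zero_Mtilde (ω : Fin n → ℕ) (ε : Fin k → ℕ)
    (M : Submodule (A K n) (Fin k → A K n)) :
    evalSub 0 (Mtilde ω ε M) = inMod ω ε M := by
  have hfun : (fun g : Fin k → At K n => fun j =>
      Polynomial.eval (algebraMap K (A K n) 0) (g j)) = E0 := by
    funext x j
    rw [map_zero]
    rfl
  apply le_antisymm
  · rw [evalSub, hfun]
    apply Submodule.span_le.mpr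
    rintro _ ⟨x, hx, rfl⟩
    exact E0_mem_of_mem_Mtilde ω ε M hx
  · rw [evalSub, hfun, inMod]
    apply Submodule.span_le.mpr
    rintro _ ⟨f, hf, hne, rfl⟩
    apply Submodule.subset_span
    exact ⟨homogenize ω ε f, Submodule.subset_span ⟨f, hf, rfl⟩, E0_homogenize ω ε f⟩

/-! ### First-grading components -/

noncomputable def fcomp (d : Fin k → ℕ) (a : ℕ) (x : Fin k → At K n) : Fin k → At K n :=
  fun j => ∑ i ∈ (x j).support, Polynomial.monomial i
    (∑ u ∈ ((x j).coeff i).support.filter (fun u => a = tdeg u + d j),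
      MvPolynomial.monomial u (MvPolynomial.coeff u ((x j).coeff i)))

lemma fcomp_pc (d : Fin k → ℕ) (a : ℕ) (x : Fin k → At K n) (j i u) :
    pc (fcomp d a x) j i u = if a = tdeg u + d j then pc x j i u else 0 := by
  classical
  have key : ∀ i', MvPolynomial.coeff u
      (∑ u' ∈ ((x j).coeff i').support.filter (fun u' => a = tdeg u' + d j),
        MvPolynomial.monomial u' (MvPolynomial.coeff u' ((x j).coeff i')))
      = if a = tdeg u + d j then pc x j i' u else 0 := by
    intro i'
    rw [MvPolynomial.coeff_sum]
    rw [Finset.sum_congr rfl fun u' _ => MvPolynomial.coeff_monomial u u' _]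
    rw [Finset.sum_ite_eq' _ u]
    simp only [Finset.mem_filter]
    by_cases hc : a = tdeg u + d j
    · rw [if_pos hc]
      by_cases hu : u ∈ ((x j).coeff i').support
      · rw [if_pos ⟨hu, hc⟩]; rfl
      · rw [if_neg (by tauto)]
        rw [pc, MvPolynomial.notMem_support_iff.mp hu]
    · rw [if_neg hc, if_neg (by tauto)]
  rw [pc, fcomp, Polynomial.finset_sum_coeff]
  have step : ∀ i' ∈ (x j).support, MvPolynomial.coeff u
      ((Polynomial.monomial i'
        (∑ u' ∈ ((x j).coeff i').support.filter (fun u' => a = tdeg u' + d j),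
          MvPolynomial.monomial u' (MvPolynomial.coeff u' ((x j).coeff i')))).coeff i)
      = if i' = i then (if a = tdeg u + d j then pc x j i' u else 0) else 0 := by
    intro i' _
    rw [Polynomial.coeff_monomial]
    by_cases h : i' = i
    · rw [if_pos h, if_pos h, key]
    · rw [if_neg h, if_neg h, MvPolynomial.coeff_zero]
  rw [MvPolynomial.coeff_sum, Finset.sum_congr rfl step, Finset.sum_ite_eq' _ i]
  by_cases hi : i ∈ (x j).support
  · rw [if_pos hi]
  · rw [if_neg hi]
    have : pc x j i u = 0 := by
      rw [pc, Polynomial.notMem_support_iff.mp hi, MvPolynomial.coeff_zero]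
    rw [this, ite_self]

lemma fcomp_add (d : Fin k → ℕ) (a : ℕ) (x y : Fin k → At K n) :
    fcomp d a (x + y) = fcomp d a x + fcomp d a y := by
  apply ext_pc; intro j i u
  rw [pc_add, fcomp_pc, fcomp_pc, fcomp_pc, pc_add]
  split <;> simp

lemma fcomp_zero (d : Fin k → ℕ) (a : ℕ) : fcomp d a (0 : Fin k → At K n) = 0 := by
  apply ext_pc; intro j i u
  rw [fcomp_pc, pc_zero, ite_self]

lemma fcomp_monomial_smul (d : Fin k → ℕ) (a m : ℕ)
    (v : Fin n →₀ ℕ) (c : K) (x : Fin k → At K n) :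
    fcomp d a ((Polynomial.monomial m (MvPolynomial.monomial v c) : At K n) • x)
      = if tdeg v ≤ a
        then (Polynomial.monomial m (MvPolynomial.monomial v c) : At K n) •
          fcomp d (a - tdeg v) x
        else 0 := by
  apply ext_pc; intro j i u
  rw [fcomp_pc, pc_monomial_smul]
  by_cases hguard : tdeg v ≤ a
  · rw [if_pos hguard, pc_monomial_smul]
    by_cases hm : m ≤ i ∧ v ≤ u
    · rw [fcomp_pc]
      have huv : u - v + v = u := tsub_add_cancel_of_le hm.2
      have h1 : tdeg (u - v) + tdeg v = tdeg u := by rw [← tdeg_add, huv]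
      by_cases hc : a = tdeg u + d j
      · rw [if_pos hc, if_pos hm, if_pos hm, if_pos (by omega)]
      · rw [if_neg hc, if_pos hm, if_neg (by omega), mul_zero]
    · rw [if_neg hm, if_neg hm, ite_self]
  · rw [if_neg hguard, pc_zero]
    by_cases hc : a = tdeg u + d j
    · rw [if_pos hc]
      by_cases hm : m ≤ i ∧ v ≤ u
      · exfalso
        have huv : u - v + v = u := tsub_add_cancel_of_le hm.2
        have h1 : tdeg (u - v) + tdeg v = tdeg u := by rw [← tdeg_add, huv]
        omega
      · rw [if_neg hm]
    · rw [if_neg hc]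

lemma bicomp_fcomp (d : Fin k → ℕ) (ω : Fin n → ℕ) (ε : Fin k → ℕ) (a' b a : ℕ)
    (x : Fin k → At K n) :
    bicomp d ω ε a' b (fcomp d a x)
      = if a' = a then bicomp d ω ε a' b x else 0 := by
  apply ext_pc; intro j i u
  rw [bicomp_pc, fcomp_pc]
  by_cases ha : a' = a
  · rw [if_pos ha, bicomp_pc]
    by_cases hc : (a', b) = (tdeg u + d j, wdeg ω u + ε j + i)
    · rw [if_pos hc, if_pos hc]
      rw [Prod.mk.injEq] at hc
      rw [if_pos (ha ▸ hc.1)]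
    · rw [if_neg hc, if_neg hc]
  · rw [if_neg ha, pc_zero]
    by_cases hc : (a', b) = (tdeg u + d j, wdeg ω u + ε j + i)
    · rw [if_pos hc]
      rw [Prod.mk.injEq] at hc
      rw [if_neg (fun h => ha (by omega))]
    · rw [if_neg hc]

noncomputable def degs (d : Fin k → ℕ) (x : Fin k → At K n) : Finset ℕ :=
  Finset.univ.biUnion fun j => (x j).support.biUnion fun i =>
    ((x j).coeff i).support.image fun u => tdeg u + d j

lemma fcomp_sum_apply {α : Type*} (d : Fin k → ℕ) (a : ℕ) (s : Finset α)
    (f : α → (Fin k → At K n)) :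
    fcomp d a (∑ c ∈ s, f c) = ∑ c ∈ s, fcomp d a (f c) := by
  classical
  induction s using Finset.induction with
  | empty => simp [fcomp_zero]
  | insert _ _ h ih => rw [Finset.sum_insert h, Finset.sum_insert h, fcomp_add, ih]

lemma sum_fcomp (d : Fin k → ℕ) (x : Fin k → At K n) :
    ∑ a ∈ degs d x, fcomp d a x = x := by
  classical
  apply ext_pc; intro j i u
  rw [pc_sum, Finset.sum_congr rfl fun a _ => fcomp_pc d a x j i u]
  have : ∀ a ∈ degs d x, (if a = tdeg u + d j then pc x j i u else 0)
      = if a = tdeg u + d j then pc x j i u else 0 := fun _ _ => rfl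
  rw [Finset.sum_ite_eq' _ (tdeg u + d j)]
  by_cases h : pc x j i u = 0
  · rw [h, ite_self]
  · rw [if_pos]
    refine Finset.mem_biUnion.mpr ⟨j, Finset.mem_univ j, ?_⟩
    refine Finset.mem_biUnion.mpr ⟨i, ?_, ?_⟩
    · rw [Polynomial.mem_support_iff]
      intro h0
      exact h (by rw [pc, h0, MvPolynomial.coeff_zero])
    · exact Finset.mem_image.mpr ⟨u, MvPolynomial.mem_support_iff.mpr h, rfl⟩

/-! ### Monomial basis elements -/

noncomputable def basisEl (j0 : Fin k) (u0 : Fin n →₀ ℕ) : Fin k → At K n :=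
  Pi.single j0 (Polynomial.C (MvPolynomial.monomial u0 1))

lemma pc_basisEl (j0 : Fin k) (u0 : Fin n →₀ ℕ) (j i u) :
    pc (basisEl j0 u0 : Fin k → At K n) j i u
      = if j = j0 ∧ i = 0 ∧ u = u0 then 1 else 0 := by
  rw [pc, basisEl, Pi.single_apply]
  by_cases hj : j = j0
  · rw [if_pos hj, Polynomial.coeff_C]
    by_cases hi : i = 0
    · rw [if_pos hi, MvPolynomial.coeff_monomial]
      by_cases hu : u0 = u
      · rw [if_pos hu, if_pos ⟨hj, hi, hu.symm⟩]
      · rw [if_neg hu, if_neg (by tauto)]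
    · rw [if_neg hi, MvPolynomial.coeff_zero, if_neg (by tauto)]
  · rw [if_neg hj, Polynomial.coeff_zero, MvPolynomial.coeff_zero, if_neg (by tauto)]

lemma fcomp_basisEl (d : Fin k → ℕ) (a : ℕ) (j0 : Fin k) (u0 : Fin n →₀ ℕ) :
    fcomp d a (basisEl j0 u0 : Fin k → At K n)
      = if a = tdeg u0 + d j0 then basisEl j0 u0 else 0 := by
  apply ext_pc; intro j i u
  by_cases ha : a = tdeg u0 + d j0
  · rw [if_pos ha, fcomp_pc, pc_basisEl]
    by_cases hb : j = j0 ∧ i = 0 ∧ u = u0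
    · obtain ⟨rfl, rfl, rfl⟩ := hb
      rw [if_pos ha]
    · rw [if_neg hb, ite_self]
  · rw [if_neg ha, fcomp_pc, pc_zero, pc_basisEl]
    by_cases hb : j = j0 ∧ i = 0 ∧ u = u0
    · obtain ⟨rfl, rfl, rfl⟩ := hb
      rw [if_neg ha]
    · rw [if_neg hb, ite_self]

/-! ### The `K[t]`-module structure -/

noncomputable abbrev phiR (K : Type*) [Field K] (n : ℕ) : Polynomial K →+* At K n :=
  Polynomial.mapRingHom (algebraMap K (A K n))

noncomputable instance instModR : Module (Polynomial K) (Fin k → At K n) :=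
  Module.compHom _ (phiR K n)

noncomputable instance instModRQ (N : Submodule (At K n) (Fin k → At K n)) :
    Module (Polynomial K) ((Fin k → At K n) ⧸ N) :=
  Module.compHom _ (phiR K n)

lemma rsmul_def (p : Polynomial K) (x : Fin k → At K n) : p • x = phiR K n p • x := rfl

lemma rsmul_mk (N : Submodule (At K n) (Fin k → At K n)) (p : Polynomial K)
    (x : Fin k → At K n) :
    p • (Submodule.Quotient.mk x : (Fin k → At K n) ⧸ N)
      = Submodule.Quotient.mk (phiR K n p • x) := by
  show phiR K n p • (Submodule.Quotient.mk x : (Fin k → At K n) ⧸ N) = _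
  rw [← Submodule.Quotient.mk_smul]

lemma phi_eq_sum (p : Polynomial K) :
    phiR K n p = ∑ m ∈ p.support,
      Polynomial.monomial m (MvPolynomial.monomial 0 (p.coeff m)) := by
  conv_lhs => rw [Polynomial.as_sum_support p, map_sum]
  refine Finset.sum_congr rfl fun m _ => ?_
  show Polynomial.map (algebraMap K (A K n)) _ = _
  rw [Polynomial.map_monomial]
  congr 1

lemma phi_smul_eq_sum (p : Polynomial K) (x : Fin k → At K n) :
    phiR K n p • x = ∑ m ∈ p.support,
      (Polynomial.monomial m (MvPolynomial.monomial 0 (p.coeff m)) : At K n) • x := by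
  rw [phi_eq_sum, Finset.sum_smul]

lemma fcomp_rsmul (d : Fin k → ℕ) (a : ℕ) (p : Polynomial K) (x : Fin k → At K n) :
    fcomp d a (p • x) = p • fcomp d a x := by
  rw [rsmul_def, rsmul_def, phi_smul_eq_sum, phi_smul_eq_sum, fcomp_sum_apply]
  refine Finset.sum_congr rfl fun m _ => ?_
  rw [fcomp_monomial_smul, if_pos (by rw [tdeg_zero]; omega), tdeg_zero, Nat.sub_zero]

lemma fcomp_mem_Mtilde (ω : Fin n → ℕ) (d ε : Fin k → ℕ)
    (M : Submodule (A K n) (Fin k → A K n)) (hM : IsGradedSub d M)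
    {x : Fin k → At K n} (hx : x ∈ Mtilde ω ε M) (a : ℕ) :
    fcomp d a x ∈ Mtilde ω ε M := by
  rw [mem_Mtilde_iff ω d ε M hM] at hx ⊢
  intro a' b
  rw [bicomp_fcomp]
  by_cases h : a' = a
  · rw [if_pos h]; exact hx a' b
  · rw [if_neg h, E1_zero]; exact M.zero_mem

lemma E1_bicomp_phi_smul (d : Fin k → ℕ) (ω : Fin n → ℕ) (ε : Fin k → ℕ) (a b : ℕ)
    (p : Polynomial K) (x : Fin k → At K n) :
    E1 (bicomp d ω ε a b (phiR K n p • x)) = ∑ m ∈ p.support,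
      if m ≤ b then (MvPolynomial.C (p.coeff m) : A K n) • E1 (bicomp d ω ε a (b - m) x)
      else 0 := by
  rw [phi_smul_eq_sum, bicomp_sum, E1_sum]
  refine Finset.sum_congr rfl fun m _ => ?_
  rw [bicomp_monomial_smul]
  by_cases h : m ≤ b
  · rw [if_pos ⟨by rw [tdeg_zero]; omega, by rw [wdeg_zero]; omega⟩,
      if_pos h, E1_monomial_smul, tdeg_zero, wdeg_zero, Nat.sub_zero, Nat.add_zero,
      MvPolynomial.C_apply]
  · rw [if_neg (by rw [tdeg_zero, wdeg_zero]; omega), if_neg h, E1_zero]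

lemma rsmul_mem_Mtilde (ω : Fin n → ℕ) (d ε : Fin k → ℕ)
    (M : Submodule (A K n) (Fin k → A K n)) (hM : IsGradedSub d M)
    {p : Polynomial K} (hp : p ≠ 0) {x : Fin k → At K n}
    (hx : phiR K n p • x ∈ Mtilde ω ε M) : x ∈ Mtilde ω ε M := by
  rw [mem_Mtilde_iff ω d ε M hM] at hx ⊢
  intro a c
  induction c using Nat.strong_induction_on with
  | _ c ih =>
  have H := hx a (p.natTrailingDegree + c)
  rw [E1_bicomp_phi_smul] at H
  set m0 := p.natTrailingDegree with hm0
  have hm0s : m0 ∈ p.support := Polynomial.natTrailingDegree_mem_support_of_nonzero hp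
  rw [← Finset.add_sum_erase _ _ hm0s] at H
  have hrest : ∑ m ∈ p.support.erase m0,
      (if m ≤ m0 + c then (MvPolynomial.C (p.coeff m) : A K n) •
        E1 (bicomp d ω ε a (m0 + c - m) x) else 0) ∈ M := by
    apply Submodule.sum_mem
    intro m hm
    have hge : m0 ≤ m :=
      Polynomial.natTrailingDegree_le_of_mem_supp m (Finset.mem_of_mem_erase hm)
    have hne : m ≠ m0 := Finset.ne_of_mem_erase hm
    by_cases hmb : m ≤ m0 + c
    · rw [if_pos hmb]
      exact M.smul_mem _ (ih (m0 + c - m) (by omega))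
    · rw [if_neg hmb]
      exact M.zero_mem
  have hkey : (MvPolynomial.C (p.coeff m0) : A K n) • E1 (bicomp d ω ε a c x) ∈ M := by
    have hsub := M.sub_mem H hrest
    rw [add_sub_cancel_right] at hsub
    rw [if_pos (Nat.le_add_right m0 c), Nat.add_sub_cancel_left] at hsub
    exact hsub
  have hco : p.coeff m0 ≠ 0 := Polynomial.mem_support_iff.mp hm0s
  have hrw : E1 (bicomp d ω ε a c x)
      = (MvPolynomial.C ((p.coeff m0)⁻¹) : A K n) •
        ((MvPolynomial.C (p.coeff m0) : A K n) • E1 (bicomp d ω ε a c x)) := by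
    rw [smul_smul, ← map_mul, inv_mul_cancel₀ hco, map_one, one_smul]
  rw [hrw]
  exact M.smul_mem _ hkey

/-! ### The quotient as a `K[t]`-module -/

noncomputable def mkR (N : Submodule (At K n) (Fin k → At K n)) :
    (Fin k → At K n) →ₗ[Polynomial K] ((Fin k → At K n) ⧸ N) where
  toFun := Submodule.Quotient.mk
  map_add' x y := by rw [Submodule.Quotient.mk_add]
  map_smul' p x := by rw [RingHom.id_apply, rsmul_mk, rsmul_def]

noncomputable def fcompL (d : Fin k → ℕ) (a : ℕ) :
    (Fin k → At K n) →ₗ[Polynomial K] (Fin k → At K n) where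
  toFun := fcomp d a
  map_add' := fcomp_add d a
  map_smul' p x := by
    show fcomp d a (p • x) = (RingHom.id (Polynomial K)) p • fcomp d a x
    rw [RingHom.id_apply, fcomp_rsmul]

def monoSet (d : Fin k → ℕ) (a : ℕ) : Set (Fin k → At K n) :=
  {y | ∃ j0 u0, a = tdeg u0 + d j0 ∧ y = basisEl j0 u0}

noncomputable def FsubR (d : Fin k → ℕ) (a : ℕ) : Submodule (Polynomial K) (Fin k → At K n) :=
  Submodule.span (Polynomial K) (monoSet d a)

noncomputable def Qsub (ω : Fin n → ℕ) (d ε : Fin k → ℕ)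
    (M : Submodule (A K n) (Fin k → A K n)) (a : ℕ) :
    Submodule (Polynomial K) ((Fin k → At K n) ⧸ Mtilde ω ε M) :=
  Submodule.map (mkR (Mtilde ω ε M)) (FsubR d a)

lemma le_tdeg (u : Fin n →₀ ℕ) (i : Fin n) : u i ≤ tdeg u := by
  by_cases h : i ∈ u.support
  · exact Finset.single_le_sum (f := fun i => u i) (fun _ _ => Nat.zero_le _) h
  · simp [Finsupp.notMem_support_iff.mp h]

lemma monoSet_finite (d : Fin k → ℕ) (a : ℕ) : (monoSet (K := K) (n := n) d a).Finite := by
  classical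
  have hsub : monoSet (K := K) d a ⊆ (fun p : Fin k × (Fin n →₀ ℕ) => basisEl p.1 p.2) ''
      (Set.univ ×ˢ Set.Iic (Finsupp.equivFunOnFinite.symm fun _ => a)) := by
    rintro y ⟨j0, u0, ha, rfl⟩
    refine ⟨(j0, u0), ⟨Set.mem_univ _, ?_⟩, rfl⟩
    intro i
    have := le_tdeg u0 i
    simp only [Finsupp.coe_equivFunOnFinite_symm]
    omega
  exact Set.Finite.subset
    (Set.Finite.image _ (Set.Finite.prod Set.finite_univ (Set.finite_Iic _))) hsub

lemma finite_Qsub (ω : Fin n → ℕ) (d ε : Fin k → ℕ)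
    (M : Submodule (A K n) (Fin k → A K n)) (a : ℕ) :
    Module.Finite (Polynomial K) ↥(Qsub ω d ε M a) := by
  have h1 : (FsubR (K := K) (n := n) d a).FG :=
    Submodule.fg_span (monoSet_finite d a)
  have h2 : (Qsub ω d ε M a).FG := Submodule.FG.map _ h1
  exact Module.Finite.iff_fg.mpr h2

lemma nzsd_Q (ω : Fin n → ℕ) (d ε : Fin k → ℕ)
    (M : Submodule (A K n) (Fin k → A K n)) (hM : IsGradedSub d M) :
    NoZeroSMulDivisors (Polynomial K) ((Fin k → At K n) ⧸ Mtilde ω ε M) := by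
  refine ⟨fun {p q} h => ?_⟩
  by_cases hp : p = 0
  · exact Or.inl hp
  right
  obtain ⟨x, rfl⟩ := Submodule.Quotient.mk_surjective _ q
  rw [rsmul_mk, Submodule.Quotient.mk_eq_zero] at h
  exact (Submodule.Quotient.mk_eq_zero _).mpr (rsmul_mem_Mtilde ω d ε M hM hp h)

set_option synthInstance.maxHeartbeats 1000000 in
lemma free_Qsub (ω : Fin n → ℕ) (d ε : Fin k → ℕ)
    (M : Submodule (A K n) (Fin k → A K n)) (hM : IsGradedSub d M) (a : ℕ) :
    Module.Free (Polynomial K) ↥(Qsub ω d ε M a) := by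
  haveI := finite_Qsub ω d ε M a
  haveI := nzsd_Q ω d ε M hM
  exact Module.free_of_finite_type_torsion_free'

lemma rmonomial_smul_basisEl (i : ℕ) (c : K) (j : Fin k) (u : Fin n →₀ ℕ) :
    (Polynomial.monomial i c : Polynomial K) • (basisEl j u : Fin k → At K n)
      = Pi.single j (Polynomial.monomial i (MvPolynomial.monomial u c)) := by
  funext j'
  rw [rsmul_def]
  show phiR K n (Polynomial.monomial i c) * basisEl j u j' = _
  rw [basisEl, Pi.single_apply, Pi.single_apply]
  by_cases hj : j' = j
  · rw [if_pos hj, if_pos hj]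
    show Polynomial.map (algebraMap K (A K n)) _ * _ = _
    rw [Polynomial.map_monomial, mul_comm, Polynomial.C_mul_monomial]
    congr 1
    rw [MvPolynomial.algebraMap_eq, MvPolynomial.C_apply, MvPolynomial.monomial_mul]
    simp
  · rw [if_neg hj, if_neg hj, mul_zero]

lemma sum_basis_repr (x : Fin k → At K n) :
    ∑ j, ∑ i ∈ (x j).support, ∑ u ∈ ((x j).coeff i).support,
      (Polynomial.monomial i (pc x j i u) : Polynomial K) • (basisEl j u : Fin k → At K n)
      = x := by
  classical
  simp only [rmonomial_smul_basisEl]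
  funext j'
  rw [Finset.sum_apply]
  have hstep : ∀ j, ((∑ i ∈ (x j).support, ∑ u ∈ ((x j).coeff i).support,
      Pi.single j (Polynomial.monomial i (MvPolynomial.monomial u (pc x j i u)))
        : Fin k → At K n)) j'
      = if j' = j then ∑ i ∈ (x j).support, ∑ u ∈ ((x j).coeff i).support,
          Polynomial.monomial i (MvPolynomial.monomial u (pc x j i u)) else 0 := by
    intro j
    by_cases h : j' = j
    · subst h
      simp [Finset.sum_apply]
    · simp [Finset.sum_apply, Pi.single_apply, h]
  rw [Finset.sum_congr rfl fun j _ => hstep j, Finset.sum_ite_eq Finset.univ j',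
    if_pos (Finset.mem_univ j')]
  conv_rhs => rw [Polynomial.as_sum_support (x j')]
  refine Finset.sum_congr rfl fun i _ => ?_
  conv_rhs => rw [← MvPolynomial.support_sum_monomial_coeff ((x j').coeff i)]
  rw [map_sum]
  rfl

lemma iSup_FsubR (d : Fin k → ℕ) : (⨆ a, FsubR (K := K) (n := n) d a) = ⊤ := by
  rw [eq_top_iff]
  intro x _
  rw [← sum_basis_repr x]
  apply Submodule.sum_mem
  intro j _
  apply Submodule.sum_mem
  intro i _
  apply Submodule.sum_mem
  intro u _
  apply Submodule.smul_mem
  exact Submodule.mem_iSup_of_mem (tdeg u + d j) (Submodule.subset_span ⟨j, u, rfl, rfl⟩)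

lemma iSup_Qsub (ω : Fin n → ℕ) (d ε : Fin k → ℕ)
    (M : Submodule (A K n) (Fin k → A K n)) :
    (⨆ a, Qsub ω d ε M a) = ⊤ := by
  have h1 : (⨆ a, Qsub ω d ε M a) = Submodule.map (mkR (Mtilde ω ε M)) ⊤ := by
    rw [← iSup_FsubR d, Submodule.map_iSup]
    rfl
  rw [h1, Submodule.map_top, LinearMap.range_eq_top]
  exact Submodule.Quotient.mk_surjective _

lemma fcomp_eq_self_of_mem (d : Fin k → ℕ) (a : ℕ) {x : Fin k → At K n}
    (hx : x ∈ FsubR (K := K) d a) : fcomp d a x = x := by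
  induction hx using Submodule.span_induction with
  | mem y hy =>
    obtain ⟨j0, u0, ha, rfl⟩ := hy
    rw [fcomp_basisEl, if_pos ha]
  | zero => exact fcomp_zero d a
  | add y z _ _ ihy ihz => rw [fcomp_add, ihy, ihz]
  | smul p y _ ih => rw [fcomp_rsmul, ih]

lemma fcomp_eq_zero_of_mem_iSup (d : Fin k → ℕ) (a : ℕ) {x : Fin k → At K n}
    (hx : x ∈ ⨆ a' ≠ a, FsubR (K := K) (n := n) d a') : fcomp d a x = 0 := by
  have hker : (⨆ a' ≠ a, FsubR (K := K) (n := n) d a') ≤ LinearMap.ker (fcompL d a) := by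
    refine iSup_le fun a' => iSup_le fun hne => ?_
    rw [FsubR, Submodule.span_le]
    rintro y ⟨j0, u0, ha, rfl⟩
    rw [SetLike.mem_coe, LinearMap.mem_ker]
    show fcomp d a (basisEl j0 u0) = 0
    rw [fcomp_basisEl, if_neg (fun h => hne (by omega))]
  exact LinearMap.mem_ker.mp (hker hx)

lemma indep_Qsub (ω : Fin n → ℕ) (d ε : Fin k → ℕ)
    (M : Submodule (A K n) (Fin k → A K n)) (hM : IsGradedSub d M) :
    iSupIndep (fun a => Qsub ω d ε M a) := by
  intro a
  rw [Submodule.disjoint_def]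
  intro q hq1 hq2
  obtain ⟨x, hx, rfl⟩ := hq1
  have hmapsup : (⨆ a' ≠ a, Qsub ω d ε M a')
      = Submodule.map (mkR (Mtilde ω ε M)) (⨆ a' ≠ a, FsubR (K := K) (n := n) d a') := by
    rw [Submodule.map_iSup]
    refine iSup_congr fun a' => ?_
    rw [Submodule.map_iSup]
    rfl
  rw [hmapsup] at hq2
  obtain ⟨y, hy, hxy⟩ := hq2
  have hmem : y - x ∈ Mtilde ω ε M := (Submodule.Quotient.eq _).mp hxy
  have h3 : fcomp d a (y - x) ∈ Mtilde ω ε M := fcomp_mem_Mtilde ω d ε M hM hmem a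
  have hsub : fcomp d a (y - x) = -x := by
    have := map_sub (fcompL d a) y x
    have hy0 : fcomp d a y = 0 := fcomp_eq_zero_of_mem_iSup d a hy
    have hx1 : fcomp d a x = x := fcomp_eq_self_of_mem d a hx
    show fcompL d a (y - x) = -x
    rw [this]
    show fcomp d a y - fcomp d a x = -x
    rw [hy0, hx1, zero_sub]
  rw [hsub] at h3
  show Submodule.Quotient.mk x = 0
  rw [Submodule.Quotient.mk_eq_zero]
  simpa using Submodule.neg_mem _ h3

end CregPaper

namespace CregPaper

/-- For a graded submodule `M ⊆ F`, the quotient `F̃/M̃` is free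
as a `K[t]`-module; evaluation `t = 1` recovers `M` and evaluation `t = 0`
yields the initial module `in_{(ω,ε)}(M)`. -/
theorem flat_family_free_and_specializations
    {K : Type*} [Field K] {n k : ℕ} (ω : Fin n → ℕ) (d ε : Fin k → ℕ)
    (M : Submodule (A K n) (Fin k → A K n)) (hM : IsGradedSub d M) :
    (@Module.Free (Polynomial K) ((Fin k → At K n) ⧸ Mtilde ω ε M) _ _
      (Module.compHom _ (Polynomial.mapRingHom (algebraMap K (A K n))))) ∧
    evalSub 1 (Mtilde ω ε M) = M ∧
    evalSub 0 (Mtilde ω ε M) = inMod ω ε M := by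
  classical
  refine ⟨?_, evalSub_one_Mtilde ω ε M, evalSub_zero_Mtilde ω ε M⟩
  have hint : DirectSum.IsInternal (fun a => Qsub ω d ε M a) :=
    DirectSum.isInternal_submodule_of_iSupIndep_of_iSup_eq_top
      (indep_Qsub ω d ε M hM) (iSup_Qsub ω d ε M)
  haveI : ∀ a, Module.Free (Polynomial K) ↥(Qsub ω d ε M a) := free_Qsub ω d ε M hM
  exact Module.Free.of_basis
    (hint.collectedBasis fun a => Module.Free.chooseBasis (Polynomial K) ↥(Qsub ω d ε M a))


end CregPaper
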